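/- The unique solution a* ≥ 0 of the equation 0.5 = 2a* + √(2a* ln 2)·log₂ e satisfies 0.053 < a* < 0.054 (a* ≈ 0.0535). -/

import Mathlib

/-!
Put `L = log 2` and `u = √(2aL)`. Since `2a = u² / L`, the equation becomes `u² + u = L / 2`,
whose only nonnegative root is `u = (√(1 + 2L) - 1) / 2`; hence `a = u² / (2L) = 1/4 - u / (2L)`
is unique, and the bounds on `a` follow from `1.544 < √(1 + 2 log 2) < 1.545`.
-/

open Real

noncomputable section

def sqAddSelfRoot (b : ℝ) : ℝ := (√(1 + 4 * b) - 1) / 2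

theorem sqAddSelfRoot_nonneg {b : ℝ} (hb : 0 ≤ b) : 0 ≤ sqAddSelfRoot b := by
  have : 1 ≤ √(1 + 4 * b) := Real.one_le_sqrt.mpr (by linarith)
  unfold sqAddSelfRoot
  linarith

theorem sqAddSelfRoot_sq_add_self {b : ℝ} (hb : 0 ≤ b) :
    sqAddSelfRoot b ^ 2 + sqAddSelfRoot b = b := by
  have := Real.sq_sqrt (show 0 ≤ 1 + 4 * b by linarith)
  unfold sqAddSelfRoot
  linear_combination this / 4

theorem eq_sqAddSelfRoot {u b : ℝ} (hu : 0 ≤ u) (h : u ^ 2 + u = b) : u = sqAddSelfRoot b := by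
  have hb : 0 ≤ b := h ▸ by positivity
  set t := sqAddSelfRoot b
  have ht : 0 ≤ t := sqAddSelfRoot_nonneg hb
  have hfac : (u - t) * (u + t + 1) = 0 := by
    linear_combination h - sqAddSelfRoot_sq_add_self hb
  rcases mul_eq_zero.mp hfac with h | h <;> linarith

def gapSolution (L c : ℝ) : ℝ := sqAddSelfRoot (c * L) ^ 2 / (2 * L)

section GapEquation

variable {L c a : ℝ}

theorem gapSolution_nonneg (hL : 0 < L) : 0 ≤ gapSolution L c := by
  unfold gapSolution
  positivity

theorem gapSolution_eq (hL : 0 < L) (hc : 0 ≤ c) :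
    gapSolution L c = c / 2 - sqAddSelfRoot (c * L) / (2 * L) := by
  have := sqAddSelfRoot_sq_add_self (mul_nonneg hc hL.le)
  unfold gapSolution
  field_simp
  linarith

theorem gap_eq_iff (hL : 0 < L) (hc : 0 ≤ c) (ha : 0 ≤ a) :
    c = 2 * a + √(2 * a * L) * (1 / L) ↔ a = gapSolution L c := by
  have hu2 : √(2 * a * L) ^ 2 = 2 * a * L := Real.sq_sqrt (by positivity)
  constructor
  · intro h
    have hroot : √(2 * a * L) ^ 2 + √(2 * a * L) = c * L := by
      rw [h, hu2]
      field_simp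
    rw [gapSolution, ← eq_sqAddSelfRoot (Real.sqrt_nonneg _) hroot, hu2]
    field_simp
  · rintro rfl
    have ht := sqAddSelfRoot_sq_add_self (mul_nonneg hc hL.le)
    have h2aL : 2 * gapSolution L c * L = sqAddSelfRoot (c * L) ^ 2 := by
      unfold gapSolution
      field_simp
    rw [h2aL, Real.sqrt_sq (sqAddSelfRoot_nonneg (mul_nonneg hc hL.le)), gapSolution]
    field_simp
    linarith

end GapEquation

theorem sqrt_one_add_two_log_two_mem : 1.544 < √(1 + 2 * log 2) ∧ √(1 + 2 * log 2) < 1.545 := by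
  have h₁ := Real.log_two_gt_d9
  have h₂ := Real.log_two_lt_d9
  constructor
  · rw [Real.lt_sqrt (by norm_num)]
    linarith
  · rw [Real.sqrt_lt' (by norm_num)]
    linarith

theorem gapSolution_log_two_half_mem :
    0.053 < gapSolution (log 2) 0.5 ∧ gapSolution (log 2) 0.5 < 0.054 := by
  have hL₁ := Real.log_two_gt_d9
  have hL₂ := Real.log_two_lt_d9
  have hL : 0 < log 2 := by linarith
  obtain ⟨hs₁, hs₂⟩ := sqrt_one_add_two_log_two_mem
  have hroot : sqAddSelfRoot (0.5 * log 2) = (√(1 + 2 * log 2) - 1) / 2 := by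
    unfold sqAddSelfRoot
    ring_nf
  rw [gapSolution_eq hL (by norm_num), hroot]
  constructor
  · rw [sub_div' (by positivity), lt_div_iff₀ (by positivity)]
    linarith
  · rw [sub_div' (by positivity), div_lt_iff₀ (by positivity)]
    linarith

end

/-- The unique nonnegative solution `a*` of `0.5 = 2a* + √(2a* ln 2) · log₂ e`
(where `log₂ e = 1/ln 2`) satisfies `0.053 < a* < 0.054` (`a* ≈ 0.0535`). -/
theorem largest_gap_value :
    ∃ a : ℝ, 0 ≤ a ∧
      (0.5 : ℝ) = 2 * a + Real.sqrt (2 * a * Real.log 2) * (1 / Real.log 2) ∧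
      0.053 < a ∧ a < 0.054 ∧
      ∀ a' : ℝ, 0 ≤ a' →
        (0.5 : ℝ) = 2 * a' + Real.sqrt (2 * a' * Real.log 2) * (1 / Real.log 2) → a' = a := by
  have hL : 0 < log 2 := Real.log_pos one_lt_two
  have hc : (0 : ℝ) ≤ 0.5 := by norm_num
  obtain ⟨hlower, hupper⟩ := gapSolution_log_two_half_mem
  have ha := gapSolution_nonneg (c := 0.5) hL
  exact ⟨gapSolution (log 2) 0.5, ha, (gap_eq_iff hL hc ha).2 rfl, hlower, hupper,
    fun a' ha' h => (gap_eq_iff hL hc ha').1 h⟩
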